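/- (Shortening lemma, stated in this paper as Lemma 3). Let G be an invertible ℓ×ℓ matrix over GF(2) defining the linear kernel g(u) = u·G, and assume the partial distance sequence D_g(0) ≤ ⋯ ≤ D_g(ℓ−1) is non-decreasing. Suppose column j of G has its last 1 in row k (i.e., G_{k,j} = 1 and G_{r,j} = 0 for all r > k). Let G̃ be the (ℓ−1)×(ℓ−1) matrix obtained by adding row k to every row of G that has a 1 in column j and then deleting row k and column j, and let g̃(v) = v·G̃ be the corresponding linear kernel of ℓ−1 dimensions. Then D_{g̃}(i) ≥ D_g(i) for 0 ≤ i ≤ k−1, and D_{g̃}(i) = D_g(i+1) for k ≤ i ≤ ℓ−2. -/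

import Mathlib

/-!
Lift `v ∈ GF(2)^{ℓ-1}` to `v̂ ∈ GF(2)^ℓ` by inserting at position `k` the entry
`∑ r, v r * G (k.succAbove r) j`. Since `G k j = 1`, column `j` of `v̂ G` vanishes and the
remaining columns of `v̂ G` are `v G̃`, so `d_H(v G̃, w G̃) = d_H(v̂ G, ŵ G)`. Since column `j` of `G`
vanishes below row `k`, the inserted entry only depends on the coordinates of `v` before `k`.
Hence lifting sends a pair split at `i` to a pair split at `i` when `i < k` and at `i + 1` when
`k ≤ i`; in the latter case, deleting coordinate `k` conversely sends a pair split at `i + 1` to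
a pair split at `i` with the same distance, because two vectors agreeing up to `k` have the same
difference as their lifts.
-/

/-- The `i`-th partial distance of a kernel `g` of `ℓ` dimensions:
`D_g(i) = min { d_H(g(w•0•u), g(w•1•v)) : w ∈ {0,1}^i, u, v ∈ {0,1}^{ℓ−1−i} }`,
phrased via pairs of inputs that agree on coordinates `< i` and differ as `0`/`1`
at coordinate `i`. -/
noncomputable def partialDist {ℓ : ℕ} (g : (Fin ℓ → ZMod 2) → (Fin ℓ → ZMod 2)) (i : ℕ) : ℕ :=
  sInf { d | ∃ x y : Fin ℓ → ZMod 2,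
    (∀ j : Fin ℓ, (j : ℕ) < i → x j = y j) ∧
    (∀ j : Fin ℓ, (j : ℕ) = i → x j = 0 ∧ y j = 1) ∧
    d = hammingDist (g x) (g y) }

open Matrix

lemma Fin.val_succAbove {n : ℕ} (p : Fin (n + 1)) (i : Fin n) :
    (p.succAbove i : ℕ) = if (i : ℕ) < p then (i : ℕ) else (i : ℕ) + 1 := by
  split_ifs with h
  · rw [succAbove_of_castSucc_lt _ _ (by simpa [lt_def] using h), val_castSucc]
  · rw [succAbove_of_le_castSucc _ _ (by simp only [le_def, val_castSucc]; omega), val_succ]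

lemma hammingDist_removeNth {β : Type*} [DecidableEq β] {n : ℕ} (p : Fin (n + 1))
    {f g : Fin (n + 1) → β} (h : f p = g p) :
    hammingDist (p.removeNth f) (p.removeNth g) = hammingDist f g := by
  simp only [hammingDist, Finset.card_filter, Fin.sum_univ_succAbove _ p, h, ne_eq,
    not_true_eq_false, if_false, zero_add]
  rfl

lemma hammingDist_eq_of_sub_eq {ι β : Type*} [Fintype ι] [AddGroup β] [DecidableEq β]
    {a b c d : ι → β} (h : a - b = c - d) : hammingDist a b = hammingDist c d := by
  have hnorm : ∀ x y : ι → β, hammingDist x y = hammingNorm (x - y) := fun x y => by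
    simp [hammingDist, hammingNorm, sub_eq_zero]
  rw [hnorm, hnorm, h]

section Shortening

variable {R : Type*} [CommRing R] {n : ℕ} (G : Matrix (Fin (n + 1)) (Fin (n + 1)) R)
  (k j : Fin (n + 1))

/-- Over `ZMod 2` this is the paper's `G̃`: add row `k` to the rows with a `1` in column `j`,
then delete row `k` and column `j`. -/
def shortenMatrix : Matrix (Fin n) (Fin n) R :=
  fun r c => G (k.succAbove r) (j.succAbove c) - G (k.succAbove r) j * G k (j.succAbove c)

def shortenLift (v : Fin n → R) : Fin (n + 1) → R :=
  k.insertNth (-∑ r, v r * G (k.succAbove r) j) v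

@[simp]
lemma removeNth_shortenLift (v : Fin n → R) : k.removeNth (shortenLift G k j v) = v := by
  ext r
  simp [shortenLift, Fin.removeNth]

lemma shortenLift_sub (v w : Fin n → R) :
    shortenLift G k j (v - w) = shortenLift G k j v - shortenLift G k j w := by
  rw [shortenLift, shortenLift, shortenLift, ← Fin.insertNth_sub]
  simp only [Pi.sub_apply, sub_mul, Finset.sum_sub_distrib, neg_sub, neg_sub_neg]

lemma vecMul_shortenLift_apply (v : Fin n → R) (c : Fin (n + 1)) :
    vecMul (shortenLift G k j v) G c =
      ∑ r, v r * (G (k.succAbove r) c - G (k.succAbove r) j * G k c) := by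
  simp only [vecMul, dotProduct, Fin.sum_univ_succAbove _ k, shortenLift,
    Fin.insertNth_apply_same, Fin.insertNth_apply_succAbove, mul_sub, Finset.sum_sub_distrib,
    neg_mul, Finset.sum_mul, mul_assoc]
  ring

lemma vecMul_shortenLift_apply_self (hkj : G k j = 1) (v : Fin n → R) :
    vecMul (shortenLift G k j v) G j = 0 := by
  simp [vecMul_shortenLift_apply, hkj]

lemma removeNth_vecMul_shortenLift (v : Fin n → R) :
    j.removeNth (vecMul (shortenLift G k j v) G) = vecMul v (shortenMatrix G k j) := by
  ext c
  rw [Fin.removeNth, vecMul_shortenLift_apply]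
  rfl

lemma hammingDist_vecMul_shortenMatrix [DecidableEq R] (hkj : G k j = 1) (v w : Fin n → R) :
    hammingDist (vecMul v (shortenMatrix G k j)) (vecMul w (shortenMatrix G k j)) =
      hammingDist (vecMul (shortenLift G k j v) G) (vecMul (shortenLift G k j w) G) := by
  rw [← removeNth_vecMul_shortenLift, ← removeNth_vecMul_shortenLift]
  exact hammingDist_removeNth j (by
    rw [vecMul_shortenLift_apply_self G k j hkj, vecMul_shortenLift_apply_self G k j hkj])

lemma injective_vecMul_shortenMatrix (hG : Function.Injective fun u => vecMul u G)
    (hkj : G k j = 1) : Function.Injective fun v => vecMul v (shortenMatrix G k j) := by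
  intro v w hvw
  have hlift : vecMul (shortenLift G k j v) G = vecMul (shortenLift G k j w) G := by
    rw [← Fin.insertNth_self_removeNth j (vecMul (shortenLift G k j v) G),
      ← Fin.insertNth_self_removeNth j (vecMul (shortenLift G k j w) G),
      vecMul_shortenLift_apply_self G k j hkj, vecMul_shortenLift_apply_self G k j hkj,
      removeNth_vecMul_shortenLift, removeNth_vecMul_shortenLift]
    exact congrArg _ hvw
  simpa using congrArg k.removeNth (hG hlift)

variable {G k j}

lemma shortenLift_apply_self_eq (hlast : ∀ r, k < r → G r j = 0) {v w : Fin n → R}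
    (hvw : ∀ r : Fin n, (r : ℕ) < k → v r = w r) :
    shortenLift G k j v k = shortenLift G k j w k := by
  simp only [shortenLift, Fin.insertNth_apply_same, neg_inj]
  refine Finset.sum_congr rfl fun r _ => ?_
  by_cases hr : (r : ℕ) < k
  · rw [hvw r hr]
  · rw [hlast _ (by rw [Fin.lt_def, Fin.val_succAbove, if_neg hr]; omega), mul_zero, mul_zero]

lemma shortenLift_removeNth (hlast : ∀ r, k < r → G r j = 0) {z : Fin (n + 1) → R}
    (hz : ∀ m : Fin (n + 1), (m : ℕ) ≤ k → z m = 0) :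
    shortenLift G k j (k.removeNth z) = z := by
  have hk : shortenLift G k j (k.removeNth z) k = z k := by
    rw [shortenLift_apply_self_eq hlast (w := 0), hz k le_rfl]
    · simp [shortenLift]
    · exact fun r hr => hz _ (by rw [Fin.val_succAbove, if_pos hr]; exact hr.le)
  rw [← Fin.insertNth_self_removeNth k (shortenLift G k j _), hk, removeNth_shortenLift,
    Fin.insertNth_self_removeNth]

lemma hammingDist_vecMul_shortenMatrix_removeNth [DecidableEq R] (hkj : G k j = 1)
    (hlast : ∀ r, k < r → G r j = 0) {x y : Fin (n + 1) → R}
    (hxy : ∀ m : Fin (n + 1), (m : ℕ) ≤ k → x m = y m) :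
    hammingDist (vecMul (k.removeNth x) (shortenMatrix G k j))
        (vecMul (k.removeNth y) (shortenMatrix G k j)) =
      hammingDist (vecMul x G) (vecMul y G) := by
  rw [hammingDist_vecMul_shortenMatrix G k j hkj]
  apply hammingDist_eq_of_sub_eq
  have hsub : k.removeNth x - k.removeNth y = k.removeNth (x - y) := rfl
  rw [← sub_vecMul, ← sub_vecMul, ← shortenLift_sub, hsub, shortenLift_removeNth hlast]
  intro m hm
  rw [Pi.sub_apply, hxy m hm, sub_self]

end Shortening

section PartialDistance

/-- `x = w•0•u` and `y = w•1•v` with `w` of length `i`. For `ℓ ≤ i` this only says `x = y`. -/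
def SplitAt {ℓ : ℕ} (i : ℕ) (x y : Fin ℓ → ZMod 2) : Prop :=
  (∀ m : Fin ℓ, (m : ℕ) < i → x m = y m) ∧ (∀ m : Fin ℓ, (m : ℕ) = i → x m = 0 ∧ y m = 1)

lemma partialDist_le_hammingDist {ℓ : ℕ} (g : (Fin ℓ → ZMod 2) → (Fin ℓ → ZMod 2)) {i : ℕ}
    {x y : Fin ℓ → ZMod 2} (h : SplitAt i x y) : partialDist g i ≤ hammingDist (g x) (g y) :=
  Nat.sInf_le ⟨x, y, h.1, h.2, rfl⟩

lemma exists_splitAt_partialDist_eq {ℓ : ℕ} (g : (Fin ℓ → ZMod 2) → (Fin ℓ → ZMod 2))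
    (i : ℕ) : ∃ x y, SplitAt i x y ∧ partialDist g i = hammingDist (g x) (g y) := by
  obtain ⟨x, y, h1, h2, hd⟩ : partialDist g i ∈ _ :=
    Nat.sInf_mem ⟨_, 0, fun m => if (m : ℕ) = i then 1 else 0,
      fun m hm => by simp [hm.ne], fun m hm => by simp [hm], rfl⟩
  exact ⟨x, y, ⟨h1, h2⟩, hd⟩

variable {n : ℕ} {k : Fin (n + 1)} {i : ℕ} {x y : Fin (n + 1) → ZMod 2}

lemma SplitAt.of_removeNth_of_lt (hi : i < k) (h : SplitAt i (k.removeNth x) (k.removeNth y)) :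
    SplitAt i x y := by
  refine ⟨fun m hm => ?_, fun m hm => ?_⟩
  all_goals
    obtain ⟨r, rfl⟩ := Fin.exists_succAbove_eq (x := m) (y := k) (by rintro rfl; omega)
    have hval := Fin.val_succAbove k r
  · exact h.1 r (by split_ifs at hval <;> omega)
  · exact h.2 r (by split_ifs at hval <;> omega)

lemma SplitAt.succ_of_removeNth (hi : k ≤ i) (hk : x k = y k)
    (h : SplitAt i (k.removeNth x) (k.removeNth y)) : SplitAt (i + 1) x y := by
  refine ⟨fun m hm => ?_, fun m hm => ?_⟩
  · rcases eq_or_ne m k with rfl | hmk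
    · exact hk
    obtain ⟨r, rfl⟩ := Fin.exists_succAbove_eq hmk
    have hval := Fin.val_succAbove k r
    exact h.1 r (by split_ifs at hval <;> omega)
  · obtain ⟨r, rfl⟩ := Fin.exists_succAbove_eq (x := m) (y := k) (by rintro rfl; omega)
    have hval := Fin.val_succAbove k r
    exact h.2 r (by split_ifs at hval <;> omega)

lemma SplitAt.removeNth_of_succ (hi : k ≤ i) (h : SplitAt (i + 1) x y) :
    SplitAt i (k.removeNth x) (k.removeNth y) := by
  refine ⟨fun r hr => ?_, fun r hr => ?_⟩ <;> have hval := Fin.val_succAbove k r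
  · exact h.1 _ (by split_ifs at hval <;> omega)
  · exact h.2 _ (by split_ifs at hval <;> omega)

variable (G : Matrix (Fin (n + 1)) (Fin (n + 1)) (ZMod 2)) (j : Fin (n + 1))

lemma partialDist_le_partialDist_shortenMatrix (hkj : G k j = 1) (hi : i < k) :
    partialDist (fun u => vecMul u G) i ≤
      partialDist (fun v => vecMul v (shortenMatrix G k j)) i := by
  obtain ⟨v, w, hvw, hd⟩ :=
    exists_splitAt_partialDist_eq (fun v => vecMul v (shortenMatrix G k j)) i
  rw [hd, hammingDist_vecMul_shortenMatrix G k j hkj]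
  exact partialDist_le_hammingDist _ (SplitAt.of_removeNth_of_lt hi (by simpa using hvw))

lemma partialDist_shortenMatrix_eq (hkj : G k j = 1) (hlast : ∀ r, k < r → G r j = 0)
    (hi : k ≤ i) :
    partialDist (fun v => vecMul v (shortenMatrix G k j)) i =
      partialDist (fun u => vecMul u G) (i + 1) := by
  apply le_antisymm
  · obtain ⟨x, y, hxy, hd⟩ := exists_splitAt_partialDist_eq (fun u => vecMul u G) (i + 1)
    rw [hd, ← hammingDist_vecMul_shortenMatrix_removeNth hkj hlast fun m hm => hxy.1 m (by omega)]
    exact partialDist_le_hammingDist _ (hxy.removeNth_of_succ hi)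
  · obtain ⟨v, w, hvw, hd⟩ :=
      exists_splitAt_partialDist_eq (fun v => vecMul v (shortenMatrix G k j)) i
    rw [hd, hammingDist_vecMul_shortenMatrix G k j hkj]
    refine partialDist_le_hammingDist _ (SplitAt.succ_of_removeNth hi ?_ (by simpa using hvw))
    exact shortenLift_apply_self_eq hlast fun r hr => hvw.1 r (by omega)

end PartialDistance

theorem shortening_lemma_general {n : ℕ}
    (G : Matrix (Fin (n + 1)) (Fin (n + 1)) (ZMod 2)) (hG : IsUnit G)
    (k j : Fin (n + 1))
    (hkj : G k j = 1) (hlast : ∀ r : Fin (n + 1), k < r → G r j = 0)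
    (G' : Matrix (Fin n) (Fin n) (ZMod 2))
    (hG' : ∀ r c, G' r c =
      if G (k.succAbove r) j = 1
      then G (k.succAbove r) (j.succAbove c) + G k (j.succAbove c)
      else G (k.succAbove r) (j.succAbove c)) :
    Function.Bijective (fun u => Matrix.vecMul u G') ∧
    (∀ i, i < (k : ℕ) →
      partialDist (fun u => Matrix.vecMul u G) i ≤
        partialDist (fun u => Matrix.vecMul u G') i) ∧
    (∀ i, (k : ℕ) ≤ i → i < n →
      partialDist (fun u => Matrix.vecMul u G') i =
        partialDist (fun u => Matrix.vecMul u G) (i + 1)) := by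
  have hmod2 : ∀ a b c : ZMod 2, (if a = 1 then b + c else b) = b - a * c := by decide
  obtain rfl : G' = shortenMatrix G k j := by
    ext r c
    rw [hG', hmod2]
    rfl
  refine ⟨?_, fun i hi => partialDist_le_partialDist_shortenMatrix G j hkj hi,
    fun i hi _ => partialDist_shortenMatrix_eq G j hkj hlast hi⟩
  exact Finite.injective_iff_bijective.mp
    (injective_vecMul_shortenMatrix G k j (vecMul_injective_iff_isUnit.mpr hG) hkj)

theorem shortening_lemma {n : ℕ}
    (G : Matrix (Fin (n + 1)) (Fin (n + 1)) (ZMod 2)) (hG : IsUnit G)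
    (k j : Fin (n + 1))
    (hkj : G k j = 1) (hlast : ∀ r : Fin (n + 1), k < r → G r j = 0)
    (hmono : ∀ i, i + 1 < n + 1 →
      partialDist (fun u => Matrix.vecMul u G) i ≤
        partialDist (fun u => Matrix.vecMul u G) (i + 1))
    (G' : Matrix (Fin n) (Fin n) (ZMod 2))
    (hG' : ∀ r c, G' r c =
      if G (k.succAbove r) j = 1
      then G (k.succAbove r) (j.succAbove c) + G k (j.succAbove c)
      else G (k.succAbove r) (j.succAbove c)) :
    Function.Bijective (fun u => Matrix.vecMul u G') ∧
    (∀ i, i < (k : ℕ) →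
      partialDist (fun u => Matrix.vecMul u G) i ≤
        partialDist (fun u => Matrix.vecMul u G') i) ∧
    (∀ i, (k : ℕ) ≤ i → i < n →
      partialDist (fun u => Matrix.vecMul u G') i =
        partialDist (fun u => Matrix.vecMul u G) (i + 1)) :=
  shortening_lemma_general G hG k j hkj hlast G' hG'
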